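/- Let P be a partial monoid which is catenary associative, i.e. for all x,y,z ∈ P, if y ≠ 1_P, (x,y) ∈ dom(×) and (y,z) ∈ dom(×), then (x×y, z) ∈ dom(×). Then the semi-Thue system R_P associated with P is confluent. -/
import Mathlib


/-- A partial monoid: a type `P` with a partial multiplication (encoded as a total
function `mul` together with a domain predicate `dom`; the value of `mul` is only
meaningful on `dom`) and a total identity `one`. -/
structure PartialMonoid (P : Type*) where
  dom : P → P → Prop
  mul : P → P → P
  one : P
  dom_one_right : ∀ x, dom x one
  dom_one_left : ∀ x, dom one x
  mul_one : ∀ x, mul x one = x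
  one_mul : ∀ x, mul one x = x
  dom_assoc : ∀ x y z, (dom x y ∧ dom (mul x y) z) ↔ (dom y z ∧ dom x (mul y z))
  mul_assoc : ∀ x y z, dom x y → dom (mul x y) z → mul (mul x y) z = mul x (mul y z)

/-- One-step reduction `⇒_R` of the semi-Thue system `R_P` associated with the
partial monoid `P`: contract a composable factor `x·y` to `x×y`, or erase a
letter `1_P`. -/
inductive Red {P : Type*} (M : PartialMonoid P) : List P → List P → Prop
  | mul (u v : List P) (x y : P) (h : M.dom x y) :
      Red M (u ++ x :: y :: v) (u ++ M.mul x y :: v)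
  | one (u v : List P) : Red M (u ++ M.one :: v) (u ++ v)

/-- A word is irreducible (a normal form) if no one-step reduction applies to it. -/
def Irr {P : Type*} (M : PartialMonoid P) (w : List P) : Prop :=
  ¬ ∃ w', Red M w w'

/-- Confluence of a relation. -/
def Confluent {α : Type*} (r : α → α → Prop) : Prop :=
  ∀ a b c, Relation.ReflTransGen r a b → Relation.ReflTransGen r a c →
    ∃ d, Relation.ReflTransGen r b d ∧ Relation.ReflTransGen r c d

section Aux

variable {P : Type*} (M : PartialMonoid P)

open Relation

lemma red_mul' {a b : List P} (u v : List P) (x y : P) (h : M.dom x y)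
    (ha : a = u ++ x :: y :: v) (hb : b = u ++ M.mul x y :: v) : Red M a b := by
  subst ha hb; exact Red.mul u v x y h

lemma red_one' {a b : List P} (u v : List P)
    (ha : a = u ++ M.one :: v) (hb : b = u ++ v) : Red M a b := by
  subst ha hb; exact Red.one u v

lemma red_inv {a c : List P} (h : Red M a c) :
    (∃ u v x y, M.dom x y ∧ a = u ++ x :: y :: v ∧ c = u ++ M.mul x y :: v) ∨
    (∃ u v, a = u ++ M.one :: v ∧ c = u ++ v) := by
  cases h with
  | mul u v x y h => exact Or.inl ⟨u, v, x, y, h, rfl, rfl⟩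
  | one u v => exact Or.inr ⟨u, v, rfl, rfl⟩

lemma mulmul (hcat : ∀ x y z : P, y ≠ M.one → M.dom x y → M.dom y z → M.dom (M.mul x y) z)
    (u₁ v₁ v₂ w : List P) (x₁ y₁ x₂ y₂ : P) (h₁ : M.dom x₁ y₁) (h₂ : M.dom x₂ y₂)
    (hw : x₁ :: y₁ :: v₁ = w ++ x₂ :: y₂ :: v₂) :
    ∃ d, ReflGen (Red M) (u₁ ++ M.mul x₁ y₁ :: v₁) d ∧
      ReflGen (Red M) ((u₁ ++ w) ++ M.mul x₂ y₂ :: v₂) d := by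
  match w with
  | [] =>
    obtain ⟨rfl, rfl, rfl⟩ : x₁ = x₂ ∧ y₁ = y₂ ∧ v₁ = v₂ := by simpa using hw
    exact ⟨_, ReflGen.refl, by simpa using ReflGen.refl⟩
  | [a] =>
    obtain ⟨rfl, rfl, rfl⟩ : x₁ = a ∧ y₁ = x₂ ∧ v₁ = y₂ :: v₂ := by simpa using hw
    by_cases hy : y₁ = M.one
    · subst hy
      refine ⟨u₁ ++ x₁ :: y₂ :: v₂, ?_, ?_⟩
      · rw [M.mul_one]
      · rw [M.one_mul]; simpa using ReflGen.refl
    · have hd1 : M.dom (M.mul x₁ y₁) y₂ := hcat _ _ _ hy h₁ h₂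
      have hd2 : M.dom x₁ (M.mul y₁ y₂) := ((M.dom_assoc x₁ y₁ y₂).1 ⟨h₁, hd1⟩).2
      refine ⟨u₁ ++ M.mul (M.mul x₁ y₁) y₂ :: v₂, ReflGen.single ?_, ReflGen.single ?_⟩
      · exact Red.mul u₁ v₂ _ _ hd1
      · refine red_mul' M u₁ v₂ x₁ (M.mul y₁ y₂) hd2 (by simp) ?_
        rw [M.mul_assoc _ _ _ h₁ hd1]
  | a :: b :: w' =>
    obtain ⟨rfl, rfl, rfl⟩ : x₁ = a ∧ y₁ = b ∧ v₁ = w' ++ x₂ :: y₂ :: v₂ := by simpa using hw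
    refine ⟨u₁ ++ M.mul x₁ y₁ :: w' ++ M.mul x₂ y₂ :: v₂,
      ReflGen.single ?_, ReflGen.single ?_⟩
    · exact red_mul' M (u₁ ++ M.mul x₁ y₁ :: w') v₂ x₂ y₂ h₂ (by simp) (by simp)
    · exact red_mul' M u₁ (w' ++ M.mul x₂ y₂ :: v₂) x₁ y₁ h₁ (by simp) (by simp)

lemma oneone (u₁ v₁ v₂ w : List P) (hw : M.one :: v₁ = w ++ M.one :: v₂) :
    ∃ d, ReflGen (Red M) (u₁ ++ v₁) d ∧ ReflGen (Red M) ((u₁ ++ w) ++ v₂) d := by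
  match w with
  | [] =>
    obtain rfl : v₁ = v₂ := by simpa using hw
    exact ⟨_, ReflGen.refl, by simpa using ReflGen.refl⟩
  | a :: w' =>
    obtain ⟨rfl, rfl⟩ : M.one = a ∧ v₁ = w' ++ M.one :: v₂ := by simpa using hw
    refine ⟨u₁ ++ w' ++ v₂, ReflGen.single ?_, ReflGen.single ?_⟩
    · exact red_one' M (u₁ ++ w') v₂ (by simp) (by simp)
    · exact red_one' M u₁ (w' ++ v₂) (by simp) (by simp)

lemma mulone₁ (u₁ v₁ v₂ w : List P) (x y : P) (h : M.dom x y)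
    (hw : x :: y :: v₁ = w ++ M.one :: v₂) :
    ∃ d, ReflGen (Red M) (u₁ ++ M.mul x y :: v₁) d ∧ ReflGen (Red M) ((u₁ ++ w) ++ v₂) d := by
  match w with
  | [] =>
    obtain ⟨rfl, rfl⟩ : x = M.one ∧ y :: v₁ = v₂ := by simpa using hw
    refine ⟨u₁ ++ y :: v₁, ?_, by simpa using ReflGen.refl⟩
    rw [M.one_mul]
  | [a] =>
    obtain ⟨rfl, rfl, rfl⟩ : x = a ∧ y = M.one ∧ v₁ = v₂ := by simpa using hw
    refine ⟨u₁ ++ x :: v₁, ?_, by simpa using ReflGen.refl⟩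
    rw [M.mul_one]
  | a :: b :: w' =>
    obtain ⟨rfl, rfl, rfl⟩ : x = a ∧ y = b ∧ v₁ = w' ++ M.one :: v₂ := by simpa using hw
    refine ⟨u₁ ++ M.mul x y :: w' ++ v₂, ReflGen.single ?_, ReflGen.single ?_⟩
    · exact red_one' M (u₁ ++ M.mul x y :: w') v₂ (by simp) (by simp)
    · exact red_mul' M u₁ (w' ++ v₂) x y h (by simp) (by simp)

lemma mulone₂ (u₂ v₁ v₂ w : List P) (x y : P) (h : M.dom x y)
    (hw : M.one :: v₂ = w ++ x :: y :: v₁) :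
    ∃ d, ReflGen (Red M) ((u₂ ++ w) ++ M.mul x y :: v₁) d ∧ ReflGen (Red M) (u₂ ++ v₂) d := by
  match w with
  | [] =>
    obtain ⟨rfl, rfl⟩ : M.one = x ∧ v₂ = y :: v₁ := by simpa using hw
    refine ⟨u₂ ++ y :: v₁, ?_, ReflGen.refl⟩
    rw [M.one_mul]; simpa using ReflGen.refl
  | a :: w' =>
    obtain ⟨rfl, rfl⟩ : M.one = a ∧ v₂ = w' ++ x :: y :: v₁ := by simpa using hw
    refine ⟨u₂ ++ w' ++ M.mul x y :: v₁, ReflGen.single ?_, ReflGen.single ?_⟩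
    · exact red_one' M u₂ (w' ++ M.mul x y :: v₁) (by simp) (by simp)
    · exact red_mul' M (u₂ ++ w') v₁ x y h (by simp) (by simp)

lemma local_confluent (hcat : ∀ x y z : P, y ≠ M.one → M.dom x y → M.dom y z → M.dom (M.mul x y) z)
    (a b c : List P) (hab : Red M a b) (hac : Red M a c) :
    ∃ d, ReflGen (Red M) b d ∧ ReflGen (Red M) c d := by
  rcases red_inv M hab with ⟨u₁, v₁, x₁, y₁, h₁, ha₁, rfl⟩ | ⟨u₁, v₁, ha₁, rfl⟩ <;>
    rcases red_inv M hac with ⟨u₂, v₂, x₂, y₂, h₂, ha₂, rfl⟩ | ⟨u₂, v₂, ha₂, rfl⟩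
  · have heq : u₁ ++ x₁ :: y₁ :: v₁ = u₂ ++ x₂ :: y₂ :: v₂ := ha₁.symm.trans ha₂
    rcases List.append_eq_append_iff.1 heq with ⟨w, rfl, hw⟩ | ⟨w, rfl, hw⟩
    · exact mulmul M hcat u₁ v₁ v₂ w x₁ y₁ x₂ y₂ h₁ h₂ hw
    · obtain ⟨d, hd1, hd2⟩ := mulmul M hcat u₂ v₂ v₁ w x₂ y₂ x₁ y₁ h₂ h₁ hw
      exact ⟨d, hd2, hd1⟩
  · have heq : u₁ ++ x₁ :: y₁ :: v₁ = u₂ ++ M.one :: v₂ := ha₁.symm.trans ha₂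
    rcases List.append_eq_append_iff.1 heq with ⟨w, rfl, hw⟩ | ⟨w, rfl, hw⟩
    · exact mulone₁ M u₁ v₁ v₂ w x₁ y₁ h₁ hw
    · obtain ⟨d, hd1, hd2⟩ := mulone₂ M u₂ v₁ v₂ w x₁ y₁ h₁ hw
      exact ⟨d, hd1, hd2⟩
  · have heq : u₁ ++ M.one :: v₁ = u₂ ++ x₂ :: y₂ :: v₂ := ha₁.symm.trans ha₂
    rcases List.append_eq_append_iff.1 heq with ⟨w, rfl, hw⟩ | ⟨w, rfl, hw⟩
    · obtain ⟨d, hd1, hd2⟩ := mulone₂ M u₁ v₂ v₁ w x₂ y₂ h₂ hw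
      exact ⟨d, hd2, hd1⟩
    · obtain ⟨d, hd1, hd2⟩ := mulone₁ M u₂ v₂ v₁ w x₂ y₂ h₂ hw
      exact ⟨d, hd2, hd1⟩
  · have heq : u₁ ++ M.one :: v₁ = u₂ ++ M.one :: v₂ := ha₁.symm.trans ha₂
    rcases List.append_eq_append_iff.1 heq with ⟨w, rfl, hw⟩ | ⟨w, rfl, hw⟩
    · exact oneone M u₁ v₁ v₂ w hw
    · obtain ⟨d, hd1, hd2⟩ := oneone M u₂ v₂ v₁ w hw
      exact ⟨d, hd2, hd1⟩

end Aux

/-- If the partial monoid `P` is catenary associative, then the associated semi-Thue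
system `R_P` is confluent. -/
theorem confluent_of_catenary_associative
    {P : Type*} (M : PartialMonoid P)
    (hcat : ∀ x y z : P, y ≠ M.one → M.dom x y → M.dom y z → M.dom (M.mul x y) z) :
    Confluent (Red M) := by
  intro a b c hab hac
  exact Relation.church_rosser
    (fun a b c h1 h2 => by
      obtain ⟨d, hb, hc⟩ := local_confluent M hcat a b c h1 h2
      exact ⟨d, hb, hc.to_reflTransGen⟩) hab hac
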